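/- arXiv:1605.06425 — 2 statements merged into one kernel-verified Lean document; each statement's English description precedes it below -/
import Mathlib

section
/- Let K be a unitgenerated idempotent semiring, Γ a linearly ordered abelian group, v : K → Γ_max a surjective homomorphism, and R = {x ∈ K | v(x) ≤ 1}. Then the map sending a saturated additive submonoid U ⊆ Γ_max to its preimage v⁻¹(U) is an inclusion-preserving bijection from the saturated additive submonoids of Γ_max onto the saturated R-submodules of K, with inverse sending a saturated R-submodule M ⊆ K to its image v(M). -/
/-- A saturated additive submonoid of `Γ_max = WithZero Γ` (addition is `max`). -/
def IsSatSubmonoidMax {Γ : Type*} [CommGroup Γ] [LinearOrder Γ] [IsOrderedMonoid Γ] (U : Set (WithZero Γ)) : Prop :=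
  0 ∈ U ∧ (∀ a b, a ∈ U → b ∈ U → max a b ∈ U) ∧ ∀ a b, a ≤ b → b ∈ U → a ∈ U

/-- A saturated `R`-submodule of `K`, where `R = {x ∈ K | v x ≤ 1}`:
an additive submonoid of `K`, closed under multiplication by elements of `R`,
and saturated for the canonical order `a ≤ b ↔ a + b = b`. -/
def IsSatRSubmodule {K : Type*} [CommSemiring K] {Γ : Type*} [CommGroup Γ] [LinearOrder Γ] [IsOrderedMonoid Γ]
    (v : K → WithZero Γ) (M : Set K) : Prop :=
  0 ∈ M ∧ (∀ a b, a ∈ M → b ∈ M → a + b ∈ M) ∧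
    (∀ r m, v r ≤ 1 → m ∈ M → r * m ∈ M) ∧
    ∀ a b, a + b = b → b ∈ M → a ∈ M

/-!
The only nontrivial point is that the image `v(M)` of a saturated `R`-submodule is saturated
and `M = v⁻¹(v(M))`, i.e. `v x ≤ v m` with `m ∈ M` forces `x ∈ M`. Since `K` is unitgenerated
it suffices to treat a unit `x = u`. Write `m` as a sum of units and let `w` be one of maximal
value; then `v m = v w`, and `w ∈ M` because a summand lies below the sum in an idempotent
semiring. Now `u = (u w⁻¹) w` with `v (u w⁻¹) ≤ 1`, so `u ∈ M`.
-/

structure IsMaxHom {K : Type*} [CommSemiring K] {Γ : Type*} [CommGroup Γ] [LinearOrder Γ]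
    (v : K → WithZero Γ) : Prop where
  map_zero : v 0 = 0
  map_one : v 1 = 1
  map_mul : ∀ x y, v (x * y) = v x * v y
  map_add : ∀ x y, v (x + y) = max (v x) (v y)

lemma add_sum_eq_sum_of_mem {K : Type*} [AddCommMonoid K] (hidem : ∀ x : K, x + x = x)
    {ι : Type*} {s : Finset ι} (f : ι → K) {i : ι} (hi : i ∈ s) :
    f i + ∑ j ∈ s, f j = ∑ j ∈ s, f j := by
  classical
  rw [← Finset.add_sum_erase s f hi, ← add_assoc, hidem]

namespace IsMaxHom

variable {K : Type*} [CommSemiring K] {Γ : Type*} [CommGroup Γ] [LinearOrder Γ]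
  {v : K → WithZero Γ}

lemma le_of_add_eq (hv : IsMaxHom v) {a b : K} (hab : a + b = b) : v a ≤ v b := by
  rw [← hab, hv.map_add]
  exact le_max_left _ _

lemma sum_le (hv : IsMaxHom v) {ι : Type*} {s : Finset ι} {f : ι → K} {c : WithZero Γ}
    (h : ∀ j ∈ s, v (f j) ≤ c) : v (∑ j ∈ s, f j) ≤ c :=
  Finset.sum_induction f (fun x => v x ≤ c)
    (fun a b ha hb => (hv.map_add a b).symm ▸ max_le ha hb) (hv.map_zero ▸ zero_le) h

lemma map_unit_ne_zero (hv : IsMaxHom v) (u : Kˣ) : v u ≠ 0 := by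
  intro h
  have := hv.map_mul u ↑u⁻¹
  rw [Units.mul_inv, hv.map_one, h, zero_mul] at this
  exact one_ne_zero this

variable [IsOrderedMonoid Γ]

lemma map_mul_unit_inv_le_one (hv : IsMaxHom v) {u w : Kˣ} (h : v u ≤ v w) :
    v (u * ↑w⁻¹) ≤ 1 :=
  calc v (u * ↑w⁻¹) = v u * v ↑w⁻¹ := hv.map_mul _ _
    _ ≤ v w * v ↑w⁻¹ := mul_le_mul_left h _
    _ = 1 := by rw [← hv.map_mul, Units.mul_inv, hv.map_one]

lemma isSatRSubmodule_preimage (hv : IsMaxHom v) {U : Set (WithZero Γ)}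
    (hU : IsSatSubmonoidMax U) : IsSatRSubmodule v (v ⁻¹' U) := by
  obtain ⟨hU0, hUmax, hUsat⟩ := hU
  refine ⟨?_, fun a b ha hb => ?_, fun r m hr hm => ?_, fun a b hab hb => ?_⟩
  · simpa [Set.mem_preimage, hv.map_zero] using hU0
  · simpa [Set.mem_preimage, hv.map_add] using hUmax _ _ ha hb
  · refine Set.mem_preimage.2 (hUsat _ (v m) ?_ hm)
    simpa [hv.map_mul] using mul_le_mul_left hr (v m)
  · exact hUsat _ _ (hv.le_of_add_eq hab) hb

lemma exists_unit_mem_le (hv : IsMaxHom v) (hidem : ∀ x : K, x + x = x)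
    (hug : ∀ x : K, ∃ (n : ℕ) (u : Fin n → Kˣ), x = ∑ i, (u i : K))
    {M : Set K} (hM : IsSatRSubmodule v M) {m : K} (hm : m ∈ M) (hm0 : v m ≠ 0) :
    ∃ w : Kˣ, (w : K) ∈ M ∧ v m ≤ v w := by
  obtain ⟨n, w, rfl⟩ := hug m
  rcases (Finset.univ : Finset (Fin n)).eq_empty_or_nonempty with hempty | hne
  · simp [hempty, hv.map_zero] at hm0
  obtain ⟨k, -, hk⟩ := Finset.exists_max_image Finset.univ (fun j => v (w j)) hne
  refine ⟨w k, hM.2.2.2 _ _ ?_ hm, hv.sum_le fun j _ => hk j (Finset.mem_univ j)⟩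
  exact add_sum_eq_sum_of_mem hidem (fun j => (w j : K)) (Finset.mem_univ k)

lemma unit_mem_of_le (hv : IsMaxHom v) (hidem : ∀ x : K, x + x = x)
    (hug : ∀ x : K, ∃ (n : ℕ) (u : Fin n → Kˣ), x = ∑ i, (u i : K))
    {M : Set K} (hM : IsSatRSubmodule v M) {m : K} (hm : m ∈ M) {u : Kˣ} (hle : v u ≤ v m) :
    (u : K) ∈ M := by
  have hm0 : v m ≠ 0 := ne_bot_of_le_ne_bot (hv.map_unit_ne_zero u) hle
  obtain ⟨w, hwM, hmw⟩ := hv.exists_unit_mem_le hidem hug hM hm hm0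
  have hmem := hM.2.2.1 _ _ (hv.map_mul_unit_inv_le_one (hle.trans hmw)) hwM
  rwa [mul_assoc, Units.inv_mul, mul_one] at hmem

lemma mem_of_le (hv : IsMaxHom v) (hidem : ∀ x : K, x + x = x)
    (hug : ∀ x : K, ∃ (n : ℕ) (u : Fin n → Kˣ), x = ∑ i, (u i : K))
    {M : Set K} (hM : IsSatRSubmodule v M) {m x : K} (hm : m ∈ M) (hle : v x ≤ v m) :
    x ∈ M := by
  obtain ⟨n, u, rfl⟩ := hug x
  refine Finset.sum_induction _ (· ∈ M) hM.2.1 hM.1 fun i _ => ?_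
  have hui : v (u i) ≤ v (∑ j, (u j : K)) :=
    hv.le_of_add_eq (add_sum_eq_sum_of_mem hidem (fun j => (u j : K)) (Finset.mem_univ i))
  exact hv.unit_mem_of_le hidem hug hM hm (hui.trans hle)

lemma isSatSubmonoidMax_image (hv : IsMaxHom v) (hsurj : Function.Surjective v)
    (hidem : ∀ x : K, x + x = x)
    (hug : ∀ x : K, ∃ (n : ℕ) (u : Fin n → Kˣ), x = ∑ i, (u i : K))
    {M : Set K} (hM : IsSatRSubmodule v M) : IsSatSubmonoidMax (v '' M) := by
  refine ⟨⟨0, hM.1, hv.map_zero⟩, ?_, ?_⟩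
  · rintro _ _ ⟨x, hx, rfl⟩ ⟨y, hy, rfl⟩
    exact ⟨x + y, hM.2.1 x y hx hy, hv.map_add x y⟩
  · rintro a _ hab ⟨m, hm, rfl⟩
    obtain ⟨x, rfl⟩ := hsurj a
    exact ⟨x, hv.mem_of_le hidem hug hM hm hab, rfl⟩

lemma preimage_image_eq (hv : IsMaxHom v) (hidem : ∀ x : K, x + x = x)
    (hug : ∀ x : K, ∃ (n : ℕ) (u : Fin n → Kˣ), x = ∑ i, (u i : K))
    {M : Set K} (hM : IsSatRSubmodule v M) : v ⁻¹' (v '' M) = M :=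
  (Set.subset_preimage_image v M).antisymm' fun _ ⟨_, hm, hmx⟩ =>
    hv.mem_of_le hidem hug hM hm hmx.ge

end IsMaxHom

/-- Let `K` be a unitgenerated idempotent semiring, `Γ` a linearly ordered
abelian group, `v : K → Γ_max` a surjective homomorphism, `R = {x ∈ K | v x ≤ 1}`.
The map `U ↦ v⁻¹(U)` is an inclusion-preserving bijection from saturated additive
submonoids of `Γ_max` onto saturated `R`-submodules of `K`, with inverse `M ↦ v(M)`. -/
theorem statement4 {K : Type*} [CommSemiring K]
    (hidem : ∀ x : K, x + x = x)
    (hug : ∀ x : K, ∃ (n : ℕ) (u : Fin n → Kˣ), x = ∑ i, (u i : K))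
    {Γ : Type*} [CommGroup Γ] [LinearOrder Γ] [IsOrderedMonoid Γ]
    (v : K → WithZero Γ) (hsurj : Function.Surjective v)
    (hv0 : v 0 = 0) (hv1 : v 1 = 1)
    (hvmul : ∀ x y, v (x * y) = v x * v y)
    (hvadd : ∀ x y, v (x + y) = max (v x) (v y)) :
    (∀ U : Set (WithZero Γ), IsSatSubmonoidMax U → IsSatRSubmodule v (v ⁻¹' U)) ∧
    (∀ U₁ U₂ : Set (WithZero Γ), IsSatSubmonoidMax U₁ → IsSatSubmonoidMax U₂ →
      U₁ ⊆ U₂ → v ⁻¹' U₁ ⊆ v ⁻¹' U₂) ∧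
    (∀ U : Set (WithZero Γ), IsSatSubmonoidMax U → v '' (v ⁻¹' U) = U) ∧
    (∀ M : Set K, IsSatRSubmodule v M →
      IsSatSubmonoidMax (v '' M) ∧ v ⁻¹' (v '' M) = M) := by
  have hv : IsMaxHom v := ⟨hv0, hv1, hvmul, hvadd⟩
  exact ⟨fun _ hU => hv.isSatRSubmodule_preimage hU,
    fun _ _ _ _ hsub => Set.preimage_mono hsub,
    fun _ _ => Set.image_preimage_eq _ hsurj,
    fun _ hM => ⟨hv.isSatSubmonoidMax_image hsurj hidem hug hM,
      hv.preimage_image_eq hidem hug hM⟩⟩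
end

section
/- Let R be an idempotent semiring and A a simple R-algebra (an idempotent semiring) which is seminoetherian as an R-module. Then every element of A that is quasiintegral over R is integral over R. -/
/-!
Write `a ≤ b` for `a + b = b` and let `M` be a finite faithful `R⟨x⟩`-submodule with generator
`m₀`. Every `t ∈ R⟨x⟩` satisfies `t m₀ ≤ r • m₀` for some `r ∈ R`, because the `t` with this
property form a saturated subsemiring containing `x` and `R`. If `m₀ ≠ 0`, simplicity applied to
the saturated ideal `{a | a ≤ c m₀ for some c}` gives `1 ≤ c m₀`, hence `t ≤ c t m₀ ≤ r • (c m₀)`: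
the `R`-submodule `R⟨x⟩` lies in the finite submodule `{y | y ≤ r • (c m₀) for some r}` and is
therefore finite by seminoetherianity. If `m₀ = 0`, faithfulness forces `R⟨x⟩ = {0}`.
-/

/-- A saturated subsemiring of an idempotent semiring `A`: a subsemiring (as a set)
that is saturated for the canonical order `a ≤ b ↔ a + b = b`. -/
def IsSatSubsemiring {A : Type*} [CommSemiring A] (S : Set A) : Prop :=
  0 ∈ S ∧ 1 ∈ S ∧ (∀ a b, a ∈ S → b ∈ S → a + b ∈ S) ∧
    (∀ a b, a ∈ S → b ∈ S → a * b ∈ S) ∧ ∀ a b, a + b = b → b ∈ S → a ∈ S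

/-- `R⟨x⟩`: the smallest saturated subsemiring of `A` containing `x` and the image
of `R`. -/
def satGen (R : Type*) {A : Type*} [CommSemiring R] [CommSemiring A] [Algebra R A]
    (x : A) : Set A :=
  ⋂₀ {S : Set A | IsSatSubsemiring S ∧ x ∈ S ∧ Set.range (algebraMap R A) ⊆ S}

/-- `x ∈ A` is integral over `R` if `R⟨x⟩` is a finite `R`-module: there is some
`m ∈ R⟨x⟩` such that every `y ∈ R⟨x⟩` satisfies `y ≤ r • m` for some `r ∈ R`. -/
def IsIntegralOne (R : Type*) {A : Type*} [CommSemiring R] [CommSemiring A] [Algebra R A]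
    (x : A) : Prop :=
  ∃ m ∈ satGen R x, ∀ y ∈ satGen R x, ∃ r : R, y + r • m = r • m

/-- `x ∈ A` is quasiintegral over `R` if there exists an `R⟨x⟩`-submodule `M ⊆ A` which
is finite as an `R`-module and faithful as an `R⟨x⟩`-module. -/
def IsQuasiIntegralOne (R : Type*) {A : Type*} [CommSemiring R] [CommSemiring A]
    [Algebra R A] (x : A) : Prop :=
  ∃ M : Set A,
    0 ∈ M ∧ (∀ a b, a ∈ M → b ∈ M → a + b ∈ M) ∧
    (∀ t ∈ satGen R x, ∀ m ∈ M, t * m ∈ M) ∧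
    (∃ m₀ ∈ M, ∀ y ∈ M, ∃ r : R, y + r • m₀ = r • m₀) ∧
    ∀ t ∈ satGen R x, t ≠ 0 → ∃ m ∈ M, t * m ≠ 0

/-- An `R`-submodule of `A` (as a set): contains `0`, closed under addition and under
the scalar action of `R`. -/
def IsRSubmodule (R : Type*) {A : Type*} [CommSemiring R] [CommSemiring A] [Algebra R A]
    (M : Set A) : Prop :=
  0 ∈ M ∧ (∀ a b, a ∈ M → b ∈ M → a + b ∈ M) ∧ ∀ (r : R), ∀ a ∈ M, r • a ∈ M

/-- A subset `M ⊆ A` is finite as an `R`-module if there is `m ∈ M` with every `y ∈ M`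
satisfying `y ≤ r • m` for some `r ∈ R`. -/
def IsFiniteMod (R : Type*) {A : Type*} [CommSemiring R] [CommSemiring A] [Algebra R A]
    (M : Set A) : Prop :=
  ∃ m ∈ M, ∀ y ∈ M, ∃ r : R, y + r • m = r • m

theorem add_eq_right_trans {A : Type*} [AddSemigroup A] {a b c : A}
    (hab : a + b = b) (hbc : b + c = c) : a + c = c := by
  rw [← hbc, ← add_assoc, hab]

theorem add_eq_right_add {A : Type*} [AddCommSemigroup A] {a b c d : A}
    (hab : a + b = b) (hcd : c + d = d) : a + c + (b + d) = b + d := by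
  rw [add_add_add_comm, hab, hcd]

theorem mul_add_mul_eq_right {A : Type*} [Mul A] [Add A] [LeftDistribClass A] {a b : A}
    (c : A) (hab : a + b = b) : c * a + c * b = c * b := by
  rw [← mul_add, hab]

def satSpan (R : Type*) {A : Type*} [Semiring R] [AddCommMonoid A] [Module R A] (m : A) :
    Set A :=
  {y | ∃ r : R, y + r • m = r • m}

def IsSatSimple (A : Type*) [CommSemiring A] : Prop :=
  ∀ I : Set A, 0 ∈ I → (∀ a b, a ∈ I → b ∈ I → a + b ∈ I) → (∀ r a, a ∈ I → r * a ∈ I) →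
    (∀ a b, a + b = b → b ∈ I → a ∈ I) → I = {0} ∨ I = Set.univ

def IsSeminoetherian (R A : Type*) [CommSemiring R] [CommSemiring A] [Algebra R A] : Prop :=
  ∀ M : Set A, IsRSubmodule R M → IsFiniteMod R M → ∀ N ⊆ M, IsRSubmodule R N → IsFiniteMod R N

section Module

variable {R A : Type*} [Semiring R] [AddCommMonoid A] [Module R A]

theorem mem_satSpan_self {m : A} (hm : m + m = m) : m ∈ satSpan R m :=
  ⟨1, by rw [one_smul, hm]⟩

theorem eq_zero_of_mem_satSpan_zero {y : A} (hy : y ∈ satSpan R (0 : A)) : y = 0 := by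
  obtain ⟨r, hr⟩ := hy
  rwa [smul_zero, add_zero] at hr

theorem mem_satSpan_of_add_eq_right {m a b : A} (hab : a + b = b) (hb : b ∈ satSpan R m) :
    a ∈ satSpan R m :=
  let ⟨r, hr⟩ := hb
  ⟨r, add_eq_right_trans hab hr⟩

end Module

section Algebra

variable {R A : Type*} [CommSemiring R] [CommSemiring A] [Algebra R A]

theorem isRSubmodule_satSpan (m : A) : IsRSubmodule R (satSpan R m) := by
  refine ⟨⟨0, zero_add _⟩, ?_, ?_⟩
  · rintro a b ⟨r, hr⟩ ⟨s, hs⟩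
    exact ⟨r + s, by rw [add_smul]; exact add_eq_right_add hr hs⟩
  · rintro s a ⟨r, hr⟩
    exact ⟨s * r, by rw [mul_smul, ← smul_add, hr]⟩

theorem isFiniteMod_satSpan {m : A} (hm : m + m = m) : IsFiniteMod R (satSpan R m) :=
  ⟨m, mem_satSpan_self hm, fun _ hy => hy⟩

theorem one_mem_satSpan_of_ne_zero (hsimple : IsSatSimple A) {m : A} (hm : m + m = m)
    (hm₀ : m ≠ 0) : (1 : A) ∈ satSpan A m := by
  obtain ⟨hzero, hadd, hsmul⟩ := isRSubmodule_satSpan (R := A) m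
  rcases hsimple (satSpan A m) hzero hadd hsmul (fun _ _ => mem_satSpan_of_add_eq_right) with
    h | h
  · exact absurd (h ▸ mem_satSpan_self hm : m ∈ ({0} : Set A)) hm₀
  · exact h ▸ Set.mem_univ 1

theorem isSatSubsemiring_satGen (x : A) : IsSatSubsemiring (satGen R x) :=
  ⟨fun _ hS => hS.1.1, fun _ hS => hS.1.2.1,
    fun a b ha hb S hS => hS.1.2.2.1 a b (ha S hS) (hb S hS),
    fun a b ha hb S hS => hS.1.2.2.2.1 a b (ha S hS) (hb S hS),
    fun a b hab hb S hS => hS.1.2.2.2.2 a b hab (hb S hS)⟩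

theorem satGen_subset {x : A} {S : Set A} (hS : IsSatSubsemiring S) (hxS : x ∈ S)
    (hRS : Set.range (algebraMap R A) ⊆ S) : satGen R x ⊆ S :=
  Set.sInter_subset_of_mem ⟨hS, hxS, hRS⟩

theorem mem_satGen_self (x : A) : x ∈ satGen R x :=
  fun _ hS => hS.2.1

theorem algebraMap_mem_satGen (x : A) (r : R) : algebraMap R A r ∈ satGen R x :=
  fun _ hS => hS.2.2 ⟨r, rfl⟩

theorem isRSubmodule_satGen (x : A) : IsRSubmodule R (satGen R x) := by
  obtain ⟨hzero, -, hadd, hmul, -⟩ := isSatSubsemiring_satGen (R := R) x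
  exact ⟨hzero, hadd, fun r a ha => Algebra.smul_def r a ▸ hmul _ _ (algebraMap_mem_satGen x r) ha⟩

theorem mul_mem_satSpan_of_mem_satGen {x m t : A} (hm : m + m = m)
    (hx : x * m ∈ satSpan R m) (ht : t ∈ satGen R x) : t * m ∈ satSpan R m := by
  obtain ⟨hzero, hadd, hsmul⟩ := isRSubmodule_satSpan (R := R) m
  refine satGen_subset (S := {a | a * m ∈ satSpan R m}) ⟨?_, ?_, ?_, ?_, ?_⟩ hx ?_ ht
  · simpa only [Set.mem_ofPred_eq, zero_mul] using hzero
  · simpa only [Set.mem_ofPred_eq, one_mul] using mem_satSpan_self hm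
  · intro a b ha hb
    simpa only [Set.mem_ofPred_eq, add_mul] using hadd _ _ ha hb
  · rintro a b ha ⟨s, hs⟩
    have hle : a * b * m + s • (a * m) = s • (a * m) := by
      rw [mul_assoc, ← mul_smul_comm]
      exact mul_add_mul_eq_right a hs
    exact mem_satSpan_of_add_eq_right hle (hsmul s _ ha)
  · intro a b hab hb
    exact mem_satSpan_of_add_eq_right (by rw [← add_mul, hab]) hb
  · rintro _ ⟨r, rfl⟩
    simpa only [Set.mem_ofPred_eq, ← Algebra.smul_def] using hsmul r m (mem_satSpan_self hm)

theorem mem_satSpan_mul_of_mul_mem_satSpan {c m t : A} (hc : 1 + c * m = c * m)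
    (ht : t * m ∈ satSpan R m) : t ∈ satSpan R (c * m) := by
  obtain ⟨r, hr⟩ := ht
  refine ⟨r, add_eq_right_trans (b := c * (t * m)) ?_ ?_⟩
  · simpa only [mul_one, mul_left_comm t c m] using mul_add_mul_eq_right t hc
  · simpa only [mul_smul_comm] using mul_add_mul_eq_right c hr

theorem isIntegralOne_of_satGen_subset_satSpan (hseminoeth : IsSeminoetherian R A) {x m : A}
    (hm : m + m = m) (h : satGen R x ⊆ satSpan R m) : IsIntegralOne R x :=
  hseminoeth _ (isRSubmodule_satSpan m) (isFiniteMod_satSpan hm) _ h (isRSubmodule_satGen x)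

end Algebra

theorem statement13_general {R A : Type*} [CommSemiring R] [CommSemiring A] [Algebra R A]
    (hA : ∀ a : A, a + a = a)
    (hsimple : ∀ I : Set A,
      0 ∈ I →
      (∀ a b, a ∈ I → b ∈ I → a + b ∈ I) →
      (∀ r a, a ∈ I → r * a ∈ I) →
      (∀ a b, a + b = b → b ∈ I → a ∈ I) →
      I = {0} ∨ I = Set.univ)
    (hseminoeth : ∀ M : Set A, IsRSubmodule R M → IsFiniteMod R M →
      ∀ N ⊆ M, IsRSubmodule R N → IsFiniteMod R N)
    (x : A) (hx : IsQuasiIntegralOne R x) :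
    IsIntegralOne R x := by
  obtain ⟨M, -, -, hMmul, ⟨m₀, hm₀M, hM⟩, hfaith⟩ := hx
  rcases eq_or_ne m₀ 0 with rfl | hm₀
  · refine isIntegralOne_of_satGen_subset_satSpan hseminoeth (add_zero 0) fun t ht => ⟨0, ?_⟩
    rw [smul_zero, add_zero]
    by_contra ht₀
    obtain ⟨m, hm, htm⟩ := hfaith t ht ht₀
    exact htm (by rw [eq_zero_of_mem_satSpan_zero (hM m hm), mul_zero])
  · obtain ⟨c, hc⟩ := one_mem_satSpan_of_ne_zero hsimple (hA m₀) hm₀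
    have hxm₀ : x * m₀ ∈ satSpan R m₀ := hM _ (hMmul x (mem_satGen_self x) m₀ hm₀M)
    refine isIntegralOne_of_satGen_subset_satSpan hseminoeth (hA (c * m₀)) fun t ht => ?_
    exact mem_satSpan_mul_of_mul_mem_satSpan hc (mul_mem_satSpan_of_mem_satGen (hA m₀) hxm₀ ht)

/-- Let `R` be an idempotent semiring and `A` a simple `R`-algebra
(an idempotent semiring) which is seminoetherian as an `R`-module (every finite
submodule is noetherian, i.e. all of its submodules are finite).  Then every element of
`A` that is quasiintegral over `R` is integral over `R`. -/
theorem statement13 {R A : Type*} [CommSemiring R] [CommSemiring A] [Algebra R A]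
    (hR : ∀ r : R, r + r = r) (hA : ∀ a : A, a + a = a)
    (hsimple : ∀ I : Set A,
      0 ∈ I →
      (∀ a b, a ∈ I → b ∈ I → a + b ∈ I) →
      (∀ r a, a ∈ I → r * a ∈ I) →
      (∀ a b, a + b = b → b ∈ I → a ∈ I) →
      I = {0} ∨ I = Set.univ)
    (hseminoeth : ∀ M : Set A, IsRSubmodule R M → IsFiniteMod R M →
      ∀ N ⊆ M, IsRSubmodule R N → IsFiniteMod R N)
    (x : A) (hx : IsQuasiIntegralOne R x) :
    IsIntegralOne R x :=
  statement13_general hA hsimple hseminoeth x hx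
end
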